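/- Let F be a number field of degree d = [F:ℚ], let Λ_1, …, Λ_n be fractional ideals of F, let D_1, …, D_n be compact subsets of F_∞ = F ⊗_ℚ ℝ, and let ε > 0. Then there exists a constant C > 0 (depending only on the D_i, the Λ_i and ε) such that for all real numbers a_1, …, a_n ≥ ε and every nonzero integral ideal 𝔫 of 𝒪_F, the number of tuples (x_1, …, x_n) ∈ F^n with x_i ∈ a_i·D_i ∩ 𝔫Λ_i for every i (intersections inside F_∞) and (x_1, …, x_n) ≠ (0, …, 0) is at most C · (∏_{i=1}^n a_i^d) / N(𝔫). -/

import Mathlib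

open scoped TensorProduct Pointwise nonZeroDivisors
open NumberField

/-- The scalar action of `ℝ` on `V ⊗[ℚ] ℝ` through the right tensor factor. -/
noncomputable instance tensorRealSMul (V : Type*) [AddCommGroup V] [Module ℚ V] :
    SMul ℝ (V ⊗[ℚ] ℝ) :=
  ⟨fun a x => (TensorProduct.comm ℚ V ℝ).symm (a • TensorProduct.comm ℚ V ℝ x)⟩

/-- The `ℝ`-module structure on `V ⊗[ℚ] ℝ` through the right tensor factor. -/
noncomputable instance tensorRealModule (V : Type*) [AddCommGroup V] [Module ℚ V] :
    Module ℝ (V ⊗[ℚ] ℝ) :=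
  Function.Injective.module ℝ (TensorProduct.comm ℚ V ℝ).toLinearMap.toAddMonoidHom
    (TensorProduct.comm ℚ V ℝ).injective
    (fun _ _ => (TensorProduct.comm ℚ V ℝ).apply_symm_apply _)

/-- The canonical topology on the finite-dimensional real vector space `V ⊗[ℚ] ℝ`
(the unique topology making it a topological `ℝ`-vector space). -/
noncomputable instance tensorRealTopology (V : Type*) [AddCommGroup V] [Module ℚ V] :
    TopologicalSpace (V ⊗[ℚ] ℝ) := moduleTopology ℝ (V ⊗[ℚ] ℝ)

/-!
Multiplying by the denominator of `Λ` maps `𝔫Λ` into `𝔫 ⊆ 𝒪_F`, and the coordinates of the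
image in an integral basis are integers. They are continuous linear functionals on `F_∞`, hence
`O(a)` on `a • D`. A nonzero `z ∈ 𝔫` satisfies `N 𝔫 ≤ |N z| ≤ B · max_k |z_k| ^ d`, with `B`
depending only on the basis, so distinct points of `a • D ∩ 𝔫Λ` differ by at least `1` and by
at least `δ = (N 𝔫 / B) ^ (1/d)` in some coordinate. Counting `δ`-separated points in a box of
side `O(a)` gives `O(a ^ d)` points, and `O(a ^ d / N 𝔫)` nonzero ones (a nonzero point forces
`δ = O(a)`). A nonzero tuple has a nonzero entry `x_j`, so the tuples are covered by `n` products
each with one factor of the second kind.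
-/

theorem Set.ncard_univ_pi {ι α : Type*} [Fintype ι] (S : ι → Set α) :
    (Set.univ.pi S).ncard = ∏ i, (S i).ncard := by
  simp_rw [← Nat.card_coe_set_eq, Nat.card_congr (Equiv.Set.univPi S), Nat.card_pi]

theorem Set.ncard_pi_ne_zero_le {ι α : Type*} [Fintype ι] [DecidableEq ι] [Zero α]
    (S : ι → Set α) (hS : ∀ i, (S i).Finite) :
    {x : ι → α | (∀ i, x i ∈ S i) ∧ x ≠ 0}.ncard ≤
      ∑ j, (S j \ {0}).ncard * ∏ i ∈ Finset.univ \ {j}, (S i).ncard := by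
  have hcover : {x : ι → α | (∀ i, x i ∈ S i) ∧ x ≠ 0} ⊆
      ⋃ j, Set.univ.pi (Function.update S j (S j \ {0})) := by
    rintro x ⟨hxS, hx0⟩
    obtain ⟨j, hj⟩ := Function.ne_iff.1 hx0
    refine Set.mem_iUnion.2 ⟨j, fun i _ => ?_⟩
    rcases eq_or_ne i j with rfl | hij
    · simpa using ⟨hxS i, hj⟩
    · simpa [hij] using hxS i
  have hfin : ∀ j, (Set.univ.pi (Function.update S j (S j \ {0}))).Finite := fun j =>
    Set.Finite.pi fun i => by
      rcases eq_or_ne i j with rfl | hij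
      · simpa using (hS i).sdiff
      · simpa [hij] using hS i
  calc _ ≤ (⋃ j, Set.univ.pi (Function.update S j (S j \ {0}))).ncard :=
        Set.ncard_le_ncard hcover (Set.finite_iUnion hfin)
    _ ≤ ∑ j, (Set.univ.pi (Function.update S j (S j \ {0}))).ncard :=
        Set.ncard_iUnion_le_of_fintype _
    _ = _ := by
        refine Finset.sum_congr rfl fun j _ => ?_
        rw [Set.ncard_univ_pi, ← Finset.prod_update_of_mem (Finset.mem_univ j)]
        exact Finset.prod_congr rfl fun i _ => (Function.apply_update (fun _ => Set.ncard) S j _ i)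

theorem Set.finite_and_ncard_le_of_separated {α ι : Type*} [Fintype ι] {S : Set α}
    (f : α → ι → ℝ) {δ L : ℝ} (hδ : 0 < δ) (hL : 0 ≤ L) (hbound : ∀ x ∈ S, ∀ k, |f x k| ≤ L)
    (hsep : ∀ x ∈ S, ∀ y ∈ S, x ≠ y → ∃ k, δ ≤ |f x k - f y k|) :
    S.Finite ∧ (S.ncard : ℝ) ≤ (2 * L / δ + 2) ^ Fintype.card ι := by
  classical
  set cell : α → ι → ℤ := fun x k => ⌊f x k / δ⌋
  have hinj : Set.InjOn cell S := by
    intro x hx y hy hxy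
    by_contra hne
    obtain ⟨k, hk⟩ := hsep x hx y hy hne
    have h := Int.abs_sub_lt_one_of_floor_eq_floor (congrFun hxy k)
    rw [div_sub_div_same, abs_div, abs_of_pos hδ, div_lt_one hδ] at h
    exact hk.not_gt h
  set box := Fintype.piFinset fun _ : ι => Finset.Icc ⌊-L / δ⌋ ⌊L / δ⌋
  have hmaps : Set.MapsTo cell S box := fun x hx => by
    refine Fintype.mem_piFinset.2 fun k => Finset.mem_Icc.2 ⟨?_, ?_⟩ <;>
      refine Int.floor_le_floor (div_le_div_of_nonneg_right ?_ hδ.le)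
    exacts [(abs_le.1 (hbound x hx k)).1, (abs_le.1 (hbound x hx k)).2]
  have hcell : ((Finset.Icc ⌊-L / δ⌋ ⌊L / δ⌋).card : ℝ) ≤ 2 * L / δ + 2 := by
    have hle : ⌊-L / δ⌋ ≤ ⌊L / δ⌋ + 1 :=
      (Int.floor_le_floor (div_le_div_of_nonneg_right (by linarith) hδ.le)).trans (by omega)
    rw [Int.card_Icc, ← Int.cast_natCast, Int.toNat_of_nonneg (by omega)]
    push_cast
    have h1 := Int.floor_le (L / δ)
    have h2 := Int.lt_floor_add_one (-L / δ)
    linarith [neg_div δ L, mul_div_assoc 2 L δ]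
  have hfin : S.Finite :=
    Set.Finite.of_finite_image (box.finite_toSet.subset hmaps.image_subset) hinj
  refine ⟨hfin, ?_⟩
  calc (S.ncard : ℝ) ≤ box.card := by
        exact_mod_cast (Set.ncard_le_ncard_of_injOn cell hmaps hinj).trans_eq
          (Set.ncard_coe_finset box)
    _ ≤ (2 * L / δ + 2) ^ Fintype.card ι := by
        rw [Fintype.card_piFinset, Nat.cast_prod, ← Finset.card_univ, ← Finset.prod_const]
        exact Finset.prod_le_prod (fun _ _ => by positivity) fun _ _ => hcell

theorem Ideal.exists_absNorm_le_normBound_mul {S : Type*} [CommRing S] [IsDedekindDomain S]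
    [Module.Free ℤ S] [Module.Finite ℤ S] {ι : Type*} [Fintype ι] [DecidableEq ι]
    (b : Module.Basis ι ℤ S) {I : Ideal S} {z : S} (hz : z ∈ I) (hz0 : z ≠ 0) :
    ∃ k, 1 ≤ |b.repr z k| ∧
      (Ideal.absNorm I : ℤ) ≤
        ClassGroup.normBound AbsoluteValue.abs b * |b.repr z k| ^ Fintype.card ι := by
  have : Nonempty ι := b.index_nonempty
  obtain ⟨k, -, hk⟩ := Finset.univ.exists_max_image (fun k => |b.repr z k|) Finset.univ_nonempty
  obtain ⟨j, hj⟩ : ∃ j, b.repr z j ≠ 0 := by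
    by_contra! h
    exact hz0 (b.repr.injective (Finsupp.ext fun j => by simp [h j]))
  refine ⟨k, (Int.one_le_abs hj).trans (hk j (Finset.mem_univ j)), ?_⟩
  have hnorm : Algebra.norm ℤ z ≠ 0 := Algebra.norm_ne_zero_iff.2 hz0
  calc (Ideal.absNorm I : ℤ) ≤ |Algebra.norm ℤ z| :=
        Int.le_of_dvd (abs_pos.2 hnorm) ((dvd_abs _ _).2 (Ideal.absNorm_dvd_norm_of_mem hz))
    _ ≤ _ := ClassGroup.norm_le _ b z fun j => hk j (Finset.mem_univ j)

theorem FractionalIdeal.exists_mem_algebraMap_eq_den_mul {R P : Type*} [CommRing R]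
    {S : Submonoid R} [CommRing P] [Algebra R P] (I : Ideal R) (J : FractionalIdeal S P) {x : P}
    (hx : x ∈ ((I * J : FractionalIdeal S P) : Submodule R P)) :
    ∃ z ∈ I, algebraMap R P z = algebraMap R P J.den * x := by
  rw [FractionalIdeal.coe_mul, FractionalIdeal.coe_coeIdeal] at hx
  induction hx using Submodule.mul_induction_on' with
  | mem_mul_mem m hm y hy =>
    obtain ⟨m, hm, rfl⟩ := hm
    obtain ⟨y', -, hy'⟩ : J.den • y ∈ Submodule.map (Algebra.linearMap R P) J.num := by
      rw [← FractionalIdeal.den_mul_self_eq_num]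
      exact Submodule.smul_mem_pointwise_smul _ _ _ hy
    refine ⟨m * y', I.mul_mem_right _ hm, ?_⟩
    rw [Algebra.linearMap_apply, Submonoid.smul_def, Algebra.smul_def] at hy'
    simp only [Algebra.linearMap_apply, map_mul, hy']
    ring
  | add u _ v _ hu hv =>
    obtain ⟨zu, hzu, hu⟩ := hu
    obtain ⟨zv, hzv, hv⟩ := hv
    exact ⟨zu + zv, I.add_mem hzu hzv, by rw [map_add, hu, hv, mul_add]⟩

noncomputable def tensorRealCommEquiv (V : Type*) [AddCommGroup V] [Module ℚ V] :
    (V ⊗[ℚ] ℝ) ≃ₗ[ℝ] (ℝ ⊗[ℚ] V) where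
  toFun := TensorProduct.comm ℚ V ℝ
  invFun := (TensorProduct.comm ℚ V ℝ).symm
  left_inv := (TensorProduct.comm ℚ V ℝ).symm_apply_apply
  right_inv := (TensorProduct.comm ℚ V ℝ).apply_symm_apply
  map_add' := map_add _
  map_smul' _ _ := (TensorProduct.comm ℚ V ℝ).apply_symm_apply _

instance tensorRealIsModuleTopology (V : Type*) [AddCommGroup V] [Module ℚ V] :
    IsModuleTopology ℝ (V ⊗[ℚ] ℝ) := ⟨rfl⟩

noncomputable def LinearMap.tensorReal {V : Type*} [AddCommGroup V] [Module ℚ V]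
    (φ : V →ₗ[ℚ] ℚ) : V ⊗[ℚ] ℝ →ₗ[ℝ] ℝ :=
  (TensorProduct.AlgebraTensorModule.rid ℚ ℝ ℝ).toLinearMap ∘ₗ φ.baseChange ℝ ∘ₗ
    (tensorRealCommEquiv V).toLinearMap

@[simp]
theorem LinearMap.tensorReal_tmul_one {V : Type*} [AddCommGroup V] [Module ℚ V]
    (φ : V →ₗ[ℚ] ℚ) (v : V) : φ.tensorReal (v ⊗ₜ[ℚ] (1 : ℝ)) = φ v := by
  simp [LinearMap.tensorReal, tensorRealCommEquiv]

theorem exists_abs_le_mul_of_tmul_mem_smul {V : Type*} [AddCommGroup V] [Module ℚ V]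
    {ι : Type*} [Fintype ι] (φ : ι → V →ₗ[ℚ] ℚ) {D : Set (V ⊗[ℚ] ℝ)} (hD : IsCompact D) :
    ∃ R, 0 < R ∧ ∀ a, 0 ≤ a → ∀ v : V, v ⊗ₜ[ℚ] (1 : ℝ) ∈ a • D → ∀ k, |(φ k v : ℝ)| ≤ a * R := by
  let Φ : V ⊗[ℚ] ℝ →ₗ[ℝ] ι → ℝ := LinearMap.pi fun k => (φ k).tensorReal
  obtain ⟨R, hR⟩ := hD.exists_bound_of_continuousOn
    (IsModuleTopology.continuous_of_linearMap Φ).continuousOn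
  refine ⟨max R 1, by positivity, fun a ha v ⟨w, hw, hwv⟩ k => ?_⟩
  have hcoord : (φ k v : ℝ) = a * Φ w k := by
    rw [← LinearMap.tensorReal_tmul_one, ← hwv, map_smul, smul_eq_mul]
    rfl
  rw [hcoord, abs_mul, abs_of_nonneg ha]
  gcongr
  exact (norm_le_pi_norm (Φ w) k).trans ((hR w hw).trans (le_max_left R 1))

section NumberField

open ClassGroup

variable {F : Type*} [Field F] [NumberField F]

def latticePoints (D : Set (F ⊗[ℚ] ℝ)) (a : ℝ) (I : FractionalIdeal (𝓞 F)⁰ F) : Set F :=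
  {x | x ⊗ₜ[ℚ] (1 : ℝ) ∈ a • D ∧ x ∈ (I : Submodule (𝓞 F) F)}

/-- On `𝔫 * Λ` these are the integer coordinates of `Λ.den • x ∈ 𝔫` in an integral basis. -/
noncomputable def denCoord (Λ : FractionalIdeal (𝓞 F)⁰ F)
    (k : Module.Free.ChooseBasisIndex ℤ (𝓞 F)) : F →ₗ[ℚ] ℚ :=
  (integralBasis F).coord k ∘ₗ LinearMap.mulLeft ℚ (algebraMap (𝓞 F) F Λ.den)

theorem card_chooseBasisIndex_eq_finrank :
    Fintype.card (Module.Free.ChooseBasisIndex ℤ (𝓞 F)) = Module.finrank ℚ F :=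
  (Module.finrank_eq_card_chooseBasisIndex ℤ (𝓞 F)).symm.trans (RingOfIntegers.rank F)

theorem exists_one_le_abs_denCoord {𝔫 : Ideal (𝓞 F)} {Λ : FractionalIdeal (𝓞 F)⁰ F} {x : F}
    (hx : x ∈ ((𝔫 * Λ : FractionalIdeal (𝓞 F)⁰ F) : Submodule (𝓞 F) F)) (hx0 : x ≠ 0) :
    ∃ k, 1 ≤ |(denCoord Λ k x : ℝ)| ∧
      (Ideal.absNorm 𝔫 : ℝ) ≤ normBound AbsoluteValue.abs (RingOfIntegers.basis F) *
        |(denCoord Λ k x : ℝ)| ^ Module.finrank ℚ F := by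
  obtain ⟨z, hz𝔫, hz⟩ := FractionalIdeal.exists_mem_algebraMap_eq_den_mul 𝔫 Λ hx
  have hz0 : z ≠ 0 := by
    rintro rfl
    rw [map_zero, eq_comm, mul_eq_zero] at hz
    exact hz.elim (RingOfIntegers.coe_ne_zero_iff.2 (nonZeroDivisors.coe_ne_zero Λ.den)) hx0
  obtain ⟨k, hk1, hkN⟩ := Ideal.exists_absNorm_le_normBound_mul (RingOfIntegers.basis F) hz𝔫 hz0
  have hcoord : (denCoord Λ k x : ℝ) = (RingOfIntegers.basis F).repr z k := by
    simp [denCoord, ← hz, integralBasis_repr_apply]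
  refine ⟨k, ?_⟩
  rw [hcoord, ← card_chooseBasisIndex_eq_finrank]
  exact ⟨by exact_mod_cast hk1, by exact_mod_cast hkN⟩

theorem exists_le_abs_denCoord_sub {𝔫 : Ideal (𝓞 F)} {Λ : FractionalIdeal (𝓞 F)⁰ F}
    {δ : ℝ} (hδ : ∀ t : ℝ, 1 ≤ t → (Ideal.absNorm 𝔫 : ℝ) ≤
      normBound AbsoluteValue.abs (RingOfIntegers.basis F) * t ^ Module.finrank ℚ F → δ ≤ t)
    {x y : F} (hx : x ∈ ((𝔫 * Λ : FractionalIdeal (𝓞 F)⁰ F) : Submodule (𝓞 F) F))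
    (hy : y ∈ ((𝔫 * Λ : FractionalIdeal (𝓞 F)⁰ F) : Submodule (𝓞 F) F)) (hxy : x ≠ y) :
    ∃ k, δ ≤ |(denCoord Λ k x : ℝ) - denCoord Λ k y| := by
  obtain ⟨k, hk1, hkN⟩ :=
    exists_one_le_abs_denCoord (Submodule.sub_mem _ hx hy) (sub_ne_zero.2 hxy)
  exact ⟨k, by simpa using hδ _ hk1 hkN⟩

variable {Λ : FractionalIdeal (𝓞 F)⁰ F} {D : Set (F ⊗[ℚ] ℝ)} {R : ℝ}

theorem ncard_latticePoints_le
    (hR : ∀ a, 0 ≤ a → ∀ v : F, v ⊗ₜ[ℚ] (1 : ℝ) ∈ a • D → ∀ k, |(denCoord Λ k v : ℝ)| ≤ a * R)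
    (hR0 : 0 ≤ R) {a : ℝ} (ha : 0 ≤ a) (𝔫 : Ideal (𝓞 F)) :
    (latticePoints D a (𝔫 * Λ)).Finite ∧
      ((latticePoints D a (𝔫 * Λ)).ncard : ℝ) ≤ (2 * (a * R) + 2) ^ Module.finrank ℚ F := by
  have h := Set.finite_and_ncard_le_of_separated (S := latticePoints D a (𝔫 * Λ))
    (fun x k => (denCoord Λ k x : ℝ)) one_pos (by positivity) (fun x hx => hR a ha x hx.1)
    (fun x hx y hy hxy => exists_le_abs_denCoord_sub (fun t ht _ => ht) hx.2 hy.2 hxy)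
  rwa [div_one, card_chooseBasisIndex_eq_finrank] at h

theorem ncard_latticePoints_diff_zero_le
    (hR : ∀ a, 0 ≤ a → ∀ v : F, v ⊗ₜ[ℚ] (1 : ℝ) ∈ a • D → ∀ k, |(denCoord Λ k v : ℝ)| ≤ a * R)
    (hR0 : 0 ≤ R) {a : ℝ} (ha : 0 ≤ a) {𝔫 : Ideal (𝓞 F)} (h𝔫 : 𝔫 ≠ 0) :
    ((latticePoints D a (𝔫 * Λ) \ {0}).ncard : ℝ) ≤
      (4 * R) ^ Module.finrank ℚ F * normBound AbsoluteValue.abs (RingOfIntegers.basis F) *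
        a ^ Module.finrank ℚ F / Ideal.absNorm 𝔫 := by
  set d := Module.finrank ℚ F
  set B : ℝ := ((normBound AbsoluteValue.abs (RingOfIntegers.basis F) : ℤ) : ℝ)
  set N : ℝ := ((Ideal.absNorm 𝔫 : ℕ) : ℝ)
  have hd : d ≠ 0 := Module.finrank_pos.ne'
  have hB : 0 < B := Int.cast_pos.2 (normBound_pos _ _)
  have hN : 0 < N := by
    simpa [N, Nat.pos_iff_ne_zero, Ideal.absNorm_eq_zero_iff] using h𝔫
  set δ := (N / B) ^ (d⁻¹ : ℝ)
  have hδ : ∀ t : ℝ, 1 ≤ t → N ≤ B * t ^ d → δ ≤ t := fun t ht htN => by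
    rw [Real.rpow_inv_le_iff_of_pos (by positivity) (by positivity) (by positivity),
      Real.rpow_natCast, div_le_iff₀' hB]
    exact htN
  rcases (latticePoints D a (𝔫 * Λ) \ {0}).eq_empty_or_nonempty with hempty | ⟨x₀, hx₀, hx₀0⟩
  · rw [hempty, Set.ncard_empty, Nat.cast_zero]
    positivity
  obtain ⟨k, hk1, hkN⟩ := exists_one_le_abs_denCoord hx₀.2 hx₀0
  have hδaR : δ ≤ a * R := (hδ _ hk1 hkN).trans (hR a ha x₀ hx₀.1 k)
  have hδ0 : 0 < δ := by positivity
  obtain ⟨hfin, hcard⟩ := Set.finite_and_ncard_le_of_separated (S := latticePoints D a (𝔫 * Λ))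
    (fun x k => (denCoord Λ k x : ℝ)) hδ0 (by positivity) (fun x hx => hR a ha x hx.1)
    (fun x hx y hy hxy => exists_le_abs_denCoord_sub hδ hx.2 hy.2 hxy)
  rw [card_chooseBasisIndex_eq_finrank] at hcard
  calc ((latticePoints D a (𝔫 * Λ) \ {0}).ncard : ℝ)
      ≤ (latticePoints D a (𝔫 * Λ)).ncard := by
        exact_mod_cast Set.ncard_le_ncard Set.sdiff_subset hfin
    _ ≤ (2 * (a * R) / δ + 2) ^ d := hcard
    _ ≤ (4 * (a * R) / δ) ^ d := by
        gcongr
        have : 1 ≤ a * R / δ := (one_le_div hδ0).2 hδaR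
        linarith [mul_div_assoc 2 (a * R) δ, mul_div_assoc 4 (a * R) δ]
    _ = (4 * R) ^ d * B * a ^ d / N := by
        rw [div_pow, Real.rpow_inv_natCast_pow (by positivity) hd]
        field_simp
        ring

theorem exists_ncard_latticePoints_le (Λ : FractionalIdeal (𝓞 F)⁰ F) (hD : IsCompact D)
    {ε : ℝ} (hε : 0 < ε) :
    ∃ K, 0 < K ∧ ∀ a, ε ≤ a → ∀ 𝔫 : Ideal (𝓞 F), 𝔫 ≠ 0 →
      (latticePoints D a (𝔫 * Λ)).Finite ∧
      ((latticePoints D a (𝔫 * Λ)).ncard : ℝ) ≤ K * a ^ Module.finrank ℚ F ∧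
      ((latticePoints D a (𝔫 * Λ) \ {0}).ncard : ℝ) ≤
        K * a ^ Module.finrank ℚ F / Ideal.absNorm 𝔫 := by
  set d := Module.finrank ℚ F
  set B : ℝ := ((normBound AbsoluteValue.abs (RingOfIntegers.basis F) : ℤ) : ℝ)
  have hB : 0 < B := Int.cast_pos.2 (normBound_pos _ _)
  obtain ⟨R, hR0, hR⟩ := exists_abs_le_mul_of_tmul_mem_smul (denCoord Λ) hD
  refine ⟨(2 * R + 2 / ε) ^ d + (4 * R) ^ d * B, by positivity, fun a ha 𝔫 h𝔫 => ?_⟩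
  have ha0 : 0 < a := hε.trans_le ha
  obtain ⟨hfin, hcard⟩ := ncard_latticePoints_le hR hR0.le ha0.le 𝔫
  refine ⟨hfin, hcard.trans ?_, (ncard_latticePoints_diff_zero_le hR hR0.le ha0.le h𝔫).trans ?_⟩
  · have h2 : 2 ≤ 2 / ε * a := by rw [div_mul_eq_mul_div, le_div_iff₀ hε]; linarith
    calc (2 * (a * R) + 2) ^ d ≤ ((2 * R + 2 / ε) * a) ^ d := by gcongr; linarith
      _ = (2 * R + 2 / ε) ^ d * a ^ d := mul_pow _ _ _
      _ ≤ _ := by gcongr; exact le_add_of_nonneg_right (by positivity)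
  · gcongr
    exact le_add_of_nonneg_left (by positivity)

end NumberField

theorem stmt_3_general (F : Type*) [Field F] [NumberField F] (n : ℕ)
    (Λ : Fin n → FractionalIdeal (𝓞 F)⁰ F)
    (D : Fin n → Set (F ⊗[ℚ] ℝ)) (hD : ∀ i, IsCompact (D i))
    (ε : ℝ) (hε : 0 < ε) :
    ∃ C : ℝ, 0 < C ∧ ∀ a : Fin n → ℝ, (∀ i, ε ≤ a i) → ∀ 𝔫 : Ideal (𝓞 F), 𝔫 ≠ 0 →
      {x : Fin n → F |
          (∀ i, (x i) ⊗ₜ[ℚ] (1 : ℝ) ∈ a i • D i ∧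
            x i ∈ (((𝔫 : FractionalIdeal (𝓞 F)⁰ F) * Λ i : FractionalIdeal (𝓞 F)⁰ F) :
              Submodule (𝓞 F) F)) ∧ x ≠ 0}.Finite ∧
      ({x : Fin n → F |
          (∀ i, (x i) ⊗ₜ[ℚ] (1 : ℝ) ∈ a i • D i ∧
            x i ∈ (((𝔫 : FractionalIdeal (𝓞 F)⁰ F) * Λ i : FractionalIdeal (𝓞 F)⁰ F) :
              Submodule (𝓞 F) F)) ∧ x ≠ 0}.ncard : ℝ) ≤
        C * (∏ i, a i ^ (Module.finrank ℚ F)) / (Ideal.absNorm 𝔫 : ℝ) := by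
  choose K hK0 hK using fun i => exists_ncard_latticePoints_le (Λ i) (hD i) hε
  refine ⟨(n + 1) * ∏ i, K i, mul_pos (by positivity) (Finset.prod_pos fun i _ => hK0 i),
    fun a ha 𝔫 h𝔫 => ?_⟩
  set P := fun i => latticePoints (D i) (a i) (𝔫 * Λ i)
  have hP := fun i => hK i (a i) (ha i) 𝔫 h𝔫
  have ha0 : ∀ i, 0 ≤ a i := fun i => hε.le.trans (ha i)
  have hterm : ∀ j, ((P j \ {0}).ncard : ℝ) * ∏ i ∈ Finset.univ \ {j}, ((P i).ncard : ℝ) ≤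
      (∏ i, K i * a i ^ Module.finrank ℚ F) / Ideal.absNorm 𝔫 := fun j => by
    rw [Finset.prod_eq_mul_prod_sdiff_singleton_of_mem (Finset.mem_univ j), mul_div_right_comm]
    exact mul_le_mul (hP j).2.2 (Finset.prod_le_prod (fun _ _ => by positivity)
      fun i _ => (hP i).2.1) (by positivity) (by have := hK0 j; have := ha0 j; positivity)
  refine ⟨(Set.Finite.pi fun i => (hP i).1).subset fun x hx i _ => hx.1 i, ?_⟩
  calc _ ≤ ∑ j, ((P j \ {0}).ncard : ℝ) * ∏ i ∈ Finset.univ \ {j}, ((P i).ncard : ℝ) := by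
        exact_mod_cast Set.ncard_pi_ne_zero_le P fun i => (hP i).1
    _ ≤ ∑ _j : Fin n, (∏ i, K i * a i ^ Module.finrank ℚ F) / Ideal.absNorm 𝔫 :=
        Finset.sum_le_sum fun j _ => hterm j
    _ = n * ((∏ i, K i) * (∏ i, a i ^ Module.finrank ℚ F) / Ideal.absNorm 𝔫) := by
        rw [Finset.sum_const, Finset.card_univ, Fintype.card_fin, nsmul_eq_mul,
          Finset.prod_mul_distrib]
    _ ≤ (n + 1) * ((∏ i, K i) * (∏ i, a i ^ Module.finrank ℚ F) / Ideal.absNorm 𝔫) := by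
        have : 0 ≤ ∏ i, K i := Finset.prod_nonneg fun i _ => (hK0 i).le
        have : 0 ≤ ∏ i, a i ^ Module.finrank ℚ F :=
          Finset.prod_nonneg fun i _ => pow_nonneg (ha0 i) _
        gcongr
        linarith
    _ = _ := by ring

/-- Let `F` be a number field of degree `d`, `Λ_1, …, Λ_n` fractional ideals of `F`,
`D_1, …, D_n` compact subsets of `F_∞ = F ⊗_ℚ ℝ`, and `ε > 0`. Then there is `C > 0`
such that for all reals `a_1, …, a_n ≥ ε` and every nonzero integral ideal `𝔫` of `𝒪_F`,
the number of tuples `(x_1, …, x_n) ∈ F^n` with `x_i ∈ a_i•D_i ∩ 𝔫Λ_i` for every `i`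
(inside `F_∞`, with `F` embedded via `x ↦ x ⊗ 1`) and `(x_1, …, x_n) ≠ 0` is at most
`C · (∏ a_i ^ d) / N(𝔫)`. -/
theorem stmt_3 (F : Type*) [Field F] [NumberField F] (n : ℕ)
    (Λ : Fin n → FractionalIdeal (𝓞 F)⁰ F) (hΛ : ∀ i, Λ i ≠ 0)
    (D : Fin n → Set (F ⊗[ℚ] ℝ)) (hD : ∀ i, IsCompact (D i))
    (ε : ℝ) (hε : 0 < ε) :
    ∃ C : ℝ, 0 < C ∧ ∀ a : Fin n → ℝ, (∀ i, ε ≤ a i) → ∀ 𝔫 : Ideal (𝓞 F), 𝔫 ≠ 0 →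
      {x : Fin n → F |
          (∀ i, (x i) ⊗ₜ[ℚ] (1 : ℝ) ∈ a i • D i ∧
            x i ∈ (((𝔫 : FractionalIdeal (𝓞 F)⁰ F) * Λ i : FractionalIdeal (𝓞 F)⁰ F) :
              Submodule (𝓞 F) F)) ∧ x ≠ 0}.Finite ∧
      ({x : Fin n → F |
          (∀ i, (x i) ⊗ₜ[ℚ] (1 : ℝ) ∈ a i • D i ∧
            x i ∈ (((𝔫 : FractionalIdeal (𝓞 F)⁰ F) * Λ i : FractionalIdeal (𝓞 F)⁰ F) :
              Submodule (𝓞 F) F)) ∧ x ≠ 0}.ncard : ℝ) ≤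
        C * (∏ i, a i ^ (Module.finrank ℚ F)) / (Ideal.absNorm 𝔫 : ℝ) :=
  stmt_3_general F n Λ D hD ε hε
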